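/- Let p be a prime, n ≥ 2 an integer, and D a finite group of order p^n. Then the number of conjugacy classes of D is at least p² + (n−2)(p−1). -/
import Mathlib

open Function

/-- Counting lemma: if `f : α → β` is surjective and `S` is a set of elements all mapping
to a single `b0`, then `|α| ≥ (|β| - 1) + |S|`. -/
lemma count_aux {α β : Type*} [Finite α] (f : α → β) (hf : Function.Surjective f)
    (S : Set α) (b0 : β) (hS : ∀ a ∈ S, f a = b0) :
    Nat.card β - 1 + Nat.card S ≤ Nat.card α := by
  classical
  have hβ : Finite β := Finite.of_surjective f hf
  have h1 : Nat.card S ≤ Nat.card {a // f a = b0} := by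
    refine Nat.card_le_card_of_injective (fun a => ⟨a.1, hS a.1 a.2⟩) ?_
    intro a b hab
    simpa [Subtype.ext_iff] using hab
  have h2 : Nat.card {b // b ≠ b0} ≤ Nat.card {a // f a ≠ b0} := by
    refine Nat.card_le_card_of_injective
      (fun b => ⟨surjInv hf b.1, by rw [surjInv_eq hf]; exact b.2⟩) ?_
    intro a b hab
    have := congrArg (fun x : {a // f a ≠ b0} => f x.1) hab
    simpa [surjInv_eq hf, Subtype.ext_iff] using this
  have h3 : Nat.card {a // f a = b0} + Nat.card {a // f a ≠ b0} = Nat.card α := by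
    rw [← Nat.card_sum]
    exact Nat.card_congr (Equiv.sumCompl (fun a => f a = b0))
  have h4 : Nat.card {b // b = b0} + Nat.card {b // b ≠ b0} = Nat.card β := by
    rw [← Nat.card_sum]
    exact Nat.card_congr (Equiv.sumCompl (fun b => b = b0))
  have h5 : Nat.card {b // b = b0} = 1 := by
    have : Unique {b // b = b0} := ⟨⟨⟨b0, rfl⟩⟩, fun a => Subtype.ext a.2⟩
    exact Nat.card_unique
  omega

/-- A subgroup contained in the center is normal. -/
lemma normal_of_le_center' {G : Type*} [Group G] (Z : Subgroup G)
    (hZ : Z ≤ Subgroup.center G) : Z.Normal := by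
  constructor
  intro n hn g
  have hc : g * n = n * g := (Subgroup.mem_center_iff.mp (hZ hn)) g
  have : g * n * g⁻¹ = n := by
    rw [hc]; group
  rwa [this]

/-- Key step: quotienting by a central subgroup. -/
lemma step_aux {G : Type*} [Group G] [Finite G] (Z : Subgroup G) [Z.Normal]
    (hZ : Z ≤ Subgroup.center G) :
    Nat.card (ConjClasses (G ⧸ Z)) + (Nat.card Z - 1) ≤ Nat.card (ConjClasses G) := by
  classical
  set f : ConjClasses G → ConjClasses (G ⧸ Z) := ConjClasses.map (QuotientGroup.mk' Z)
  have hf : Function.Surjective f :=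
    ConjClasses.map_surjective (QuotientGroup.mk'_surjective Z)
  set S : Set (ConjClasses G) := ConjClasses.mk '' (Z : Set G)
  have hmem : ∀ c ∈ S, f c = ConjClasses.mk (1 : G ⧸ Z) := by
    rintro c ⟨z, hz, rfl⟩
    show ConjClasses.mk ((QuotientGroup.mk' Z) z) = ConjClasses.mk (1 : G ⧸ Z)
    congr 1
    exact (QuotientGroup.eq_one_iff z).mpr hz
  have hinj : Set.InjOn ConjClasses.mk (Z : Set G) := by
    intro a ha b hb hab
    have h := ConjClasses.mk_eq_mk_iff_isConj.mp hab
    rw [isConj_iff] at h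
    obtain ⟨c, hc⟩ := h
    have hcen : c * a = a * c := (Subgroup.mem_center_iff.mp (hZ ha)) c
    rw [← hc, hcen]; group
  have hcardS : Nat.card S = Nat.card Z := by
    rw [Nat.card_coe_set_eq, Set.ncard_image_of_injOn hinj,
      ← Nat.card_coe_set_eq, SetLike.coe_sort_coe]
  have := count_aux f hf S (ConjClasses.mk (1 : G ⧸ Z)) hmem
  have hpos : 1 ≤ Nat.card (ConjClasses (G ⧸ Z)) := Nat.card_pos
  have hZpos : 1 ≤ Nat.card Z := Nat.card_pos
  omega

lemma key_aux (p : ℕ) (hp : p.Prime) : ∀ n, 2 ≤ n → ∀ (G : Type u) [Group G] [Finite G],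
    Nat.card G = p ^ n → p ^ 2 + (n - 2) * (p - 1) ≤ Nat.card (ConjClasses G) := by
  refine Nat.le_induction ?_ ?_
  · -- base case n = 2: groups of order p² are commutative
    intro G _ _ hG
    haveI : Fact p.Prime := ⟨hp⟩
    have hcomm : ∀ a b : G, a * b = b * a := IsPGroup.commutative_of_card_eq_prime_sq hG
    have hinj : Function.Injective (ConjClasses.mk : G → ConjClasses G) := by
      intro a b hab
      obtain ⟨c, hc⟩ := isConj_iff.mp (ConjClasses.mk_eq_mk_iff_isConj.mp hab)
      rw [← hc, hcomm c a]; group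
    have := Nat.card_le_card_of_injective _ hinj
    simp only [Nat.sub_self, zero_mul, add_zero]
    omega
  · -- inductive step
    intro n hn IH G _ _ hG
    haveI : Fact p.Prime := ⟨hp⟩
    -- the center is nontrivial, find a central element of order p
    have hpg : IsPGroup p G := IsPGroup.of_card hG
    have hGnt : Nontrivial G := by
      have : 1 < Nat.card G := by
        rw [hG]
        exact Nat.one_lt_pow (by omega) hp.one_lt
      exact Finite.one_lt_card_iff_nontrivial.mp this
    have hcnt : Nontrivial (Subgroup.center G) := hpg.center_nontrivial
    have hdvd : p ∣ Nat.card (Subgroup.center G) := by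
      have h1 : Nat.card (Subgroup.center G) ∣ p ^ (n + 1) := by
        rw [← hG]; exact Subgroup.card_subgroup_dvd_card _
      obtain ⟨k, hk, hke⟩ := (Nat.dvd_prime_pow hp).mp h1
      have hne : Nat.card (Subgroup.center G) ≠ 1 := by
        have := @Finite.one_lt_card_iff_nontrivial (Subgroup.center G) _ |>.mpr hcnt
        omega
      rcases Nat.eq_zero_or_pos k with rfl | hkpos
      · rw [pow_zero] at hke; exact absurd hke hne
      · rw [hke]; exact dvd_pow_self p (by omega)
    haveI : Fintype (Subgroup.center G) := Fintype.ofFinite _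
    obtain ⟨g, hg⟩ := exists_prime_orderOf_dvd_card (G := Subgroup.center G) p
      (by rwa [← Nat.card_eq_fintype_card])
    set Z : Subgroup G := Subgroup.zpowers (g : G)
    have hZle : Z ≤ Subgroup.center G := by
      rw [Subgroup.zpowers_le]
      exact g.2
    have hZcard : Nat.card Z = p := by
      rw [Nat.card_zpowers, Subgroup.orderOf_coe, hg]
    haveI : Z.Normal := normal_of_le_center' Z hZle
    have hQcard : Nat.card (G ⧸ Z) = p ^ n := by
      have h := Subgroup.card_eq_card_quotient_mul_card_subgroup Z
      rw [hG, hZcard, pow_succ] at h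
      have hppos : 0 < p := hp.pos
      exact Nat.eq_of_mul_eq_mul_right hppos h.symm
    have hIH := IH (G ⧸ Z) hQcard
    have hstep := step_aux Z hZle
    rw [hZcard] at hstep
    have harith : p ^ 2 + (n + 1 - 2) * (p - 1)
        ≤ (p ^ 2 + (n - 2) * (p - 1)) + (p - 1) := by
      have h1 : n + 1 - 2 = (n - 2) + 1 := by omega
      rw [h1, add_mul, one_mul, add_assoc]
    omega

/-- For a finite group `G`, the number of conjugacy classes of `G`
is `Nat.card (ConjClasses G)`. -/
theorem conjClasses_lower_bound_p_group
    (p n : ℕ) (hp : p.Prime) (hn : 2 ≤ n)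
    (D : Type*) [Group D] [Fintype D] (hD : Fintype.card D = p ^ n) :
    p ^ 2 + (n - 2) * (p - 1) ≤ Nat.card (ConjClasses D) := by
  exact key_aux p hp n hn D (by rw [Nat.card_eq_fintype_card, hD])
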